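/- (Theorem 3.3(2), pointwise form) Let dim V = 2n and let W ⊆ V be a subspace with dim W = n. Then [the restriction of g to W is nondegenerate and J(W) ⊆ W^{⊥g} (W is a Lagrangian subspace with respect to g)] if and only if [W = W^{⊥g̃} (W is totally lightlike with respect to g̃) and the bilinear pairing (x, y) ↦ g̃(J x, y) on W × W is nondegenerate (J(W) is a lightlike transversal space for W with respect to g̃)]. -/

import Mathlib

/-- For a bilinear form `h` on `V` and a subspace `W`, the `h`-orthogonal space
`W^{⊥h} = {v ∈ V : h(v, w) = 0 for all w ∈ W}`. -/
def perpBilin {V : Type*} [AddCommGroup V] [Module ℝ V]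
    (h : V →ₗ[ℝ] V →ₗ[ℝ] ℝ) (W : Submodule ℝ V) : Submodule ℝ V where
  carrier := {v | ∀ w ∈ W, h v w = 0}
  add_mem' := by
    intro a b ha hb w hw
    simp [ha w hw, hb w hw]
  zero_mem' := by
    intro w hw
    simp
  smul_mem' := by
    intro c a ha w hw
    simp [ha w hw]

/-!
`J(W) ⊆ W^{⊥g}` says exactly that `W ⊆ W^{⊥g̃}`, and since `J² = -1` the pairing
`g̃(J x, y) = -g(x, y)` on `W` is nondegenerate exactly when `g│W` is; in finite dimension
left and right nondegeneracy of `g│W` coincide. Because `J` is invertible,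
`g̃` is nondegenerate together with `g`, so `W^{⊥g̃}` has dimension `2n - n = n = dim W`, and the
inclusion `W ⊆ W^{⊥g̃}` is an equality.
-/

open Module

section perpBilin

variable {V : Type*} [AddCommGroup V] [Module ℝ V]

theorem mem_perpBilin {h : LinearMap.BilinForm ℝ V} {W : Submodule ℝ V} {v : V} :
    v ∈ perpBilin h W ↔ ∀ w ∈ W, h v w = 0 :=
  Iff.rfl

theorem perpBilin_eq_flip_orthogonal (h : LinearMap.BilinForm ℝ V) (W : Submodule ℝ V) :
    perpBilin h W = h.flip.orthogonal W :=
  rfl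

theorem inf_perpBilin_eq_bot_iff {h : LinearMap.BilinForm ℝ V} {W : Submodule ℝ V} :
    W ⊓ perpBilin h W = ⊥ ↔ ∀ x ∈ W, (∀ y ∈ W, h x y = 0) → x = 0 := by
  simp only [Submodule.eq_bot_iff, Submodule.mem_inf, mem_perpBilin, and_imp]

theorem map_le_perpBilin_iff_le_perpBilin_comp {h : LinearMap.BilinForm ℝ V}
    {J : V →ₗ[ℝ] V} {W : Submodule ℝ V} :
    W.map J ≤ perpBilin h W ↔ W ≤ perpBilin (h ∘ₗ J) W :=
  Submodule.map_le_iff_le_comap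

theorem LinearMap.SeparatingLeft.comp_of_injective {h : LinearMap.BilinForm ℝ V}
    (hh : h.SeparatingLeft) {J : V →ₗ[ℝ] V} (hJ : Function.Injective J) :
    (h ∘ₗ J).SeparatingLeft :=
  fun x hx ↦ hJ <| by rw [hh (J x) hx, map_zero]

variable [FiniteDimensional ℝ V]

theorem inf_perpBilin_eq_bot_iff_right {h : LinearMap.BilinForm ℝ V} {W : Submodule ℝ V} :
    W ⊓ perpBilin h W = ⊥ ↔ ∀ y ∈ W, (∀ x ∈ W, h x y = 0) → y = 0 := by
  have key : (h.restrict W).SeparatingLeft ↔ (h.restrict W).SeparatingRight :=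
    ⟨fun hl ↦ (LinearMap.BilinForm.Nondegenerate.ofSeparatingLeft hl).2,
      fun hr ↦ (LinearMap.BilinForm.Nondegenerate.ofSeparatingRight hr).1⟩
  simp only [inf_perpBilin_eq_bot_iff, LinearMap.SeparatingLeft, LinearMap.SeparatingRight,
    LinearMap.BilinForm.restrict_apply, Subtype.forall, Submodule.mk_eq_zero] at key ⊢
  exact key

theorem finrank_perpBilin {h : LinearMap.BilinForm ℝ V} (hh : h.SeparatingLeft)
    (W : Submodule ℝ V) : finrank ℝ (perpBilin h W) = finrank ℝ V - finrank ℝ W := by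
  rw [perpBilin_eq_flip_orthogonal, LinearMap.BilinForm.finrank_orthogonal
    (LinearMap.BilinForm.Nondegenerate.ofSeparatingLeft hh).flip]

end perpBilin

theorem lagrangian_iff_totally_lightlike_general
    (V : Type*) [AddCommGroup V] [Module ℝ V] [FiniteDimensional ℝ V]
    (J : V →ₗ[ℝ] V) (hJ : ∀ x, J (J x) = -x)
    (g : V →ₗ[ℝ] V →ₗ[ℝ] ℝ)
    (hnd : ∀ x, (∀ y, g x y = 0) → x = 0)
    (n : ℕ) (hdim : Module.finrank ℝ V = 2 * n)
    (W : Submodule ℝ V) (hW : Module.finrank ℝ W = n) :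
    (W ⊓ perpBilin g W = ⊥ ∧ Submodule.map J W ≤ perpBilin g W) ↔
      (W = perpBilin (g ∘ₗ J) W ∧
       (∀ x ∈ W, (∀ y ∈ W, g (J (J x)) y = 0) → x = 0) ∧
       (∀ y ∈ W, (∀ x ∈ W, g (J (J x)) y = 0) → y = 0)) := by
  have hJ_inj : Function.Injective J :=
    (injective_iff_map_eq_zero J).2 fun x hx ↦ by rw [← neg_eq_zero, ← hJ, hx, map_zero]
  have hrank : finrank ℝ W = finrank ℝ (perpBilin (g ∘ₗ J) W) := by
    rw [finrank_perpBilin (LinearMap.SeparatingLeft.comp_of_injective hnd hJ_inj), hdim, hW]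
    omega
  have hW_eq : W = perpBilin (g ∘ₗ J) W ↔ W ≤ perpBilin (g ∘ₗ J) W :=
    ⟨le_of_eq, fun hle ↦ Submodule.eq_of_le_of_finrank_le hle hrank.ge⟩
  simp only [hJ, map_neg, LinearMap.neg_apply, neg_eq_zero]
  rw [map_le_perpBilin_iff_le_perpBilin_comp, hW_eq, ← inf_perpBilin_eq_bot_iff,
    ← inf_perpBilin_eq_bot_iff_right]
  tauto

/-- **Theorem 3.3(2), pointwise form.** Let `dim V = 2n` and
`dim W = n`.  Then `W` is a Lagrangian subspace with respect to `g` (i.e. `g│W`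
nondegenerate and `J(W) ⊆ W^{⊥g}`) if and only if `W = W^{⊥g̃}` (`W` is totally
lightlike with respect to the associated metric `g̃ = g ∘ J`) and the pairing
`(x, y) ↦ g̃(Jx, y)` on `W × W` is nondegenerate (`J(W)` is a lightlike
transversal space for `W` with respect to `g̃`). -/
theorem lagrangian_iff_totally_lightlike
    (V : Type*) [AddCommGroup V] [Module ℝ V] [FiniteDimensional ℝ V]
    (J : V →ₗ[ℝ] V) (hJ : ∀ x, J (J x) = -x)
    (g : V →ₗ[ℝ] V →ₗ[ℝ] ℝ)
    (hsymm : ∀ x y, g x y = g y x)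
    (hnd : ∀ x, (∀ y, g x y = 0) → x = 0)
    (hN : ∀ x y, g (J x) (J y) = -g x y)
    (n : ℕ) (hdim : Module.finrank ℝ V = 2 * n)
    (W : Submodule ℝ V) (hW : Module.finrank ℝ W = n) :
    (W ⊓ perpBilin g W = ⊥ ∧ Submodule.map J W ≤ perpBilin g W) ↔
      (W = perpBilin (g ∘ₗ J) W ∧
       (∀ x ∈ W, (∀ y ∈ W, g (J (J x)) y = 0) → x = 0) ∧
       (∀ y ∈ W, (∀ x ∈ W, g (J (J x)) y = 0) → y = 0)) :=
  lagrangian_iff_totally_lightlike_general V J hJ g hnd n hdim W hW
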